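/- (A-optimal design, matrix form.) Let S be a real symmetric positive definite n×n matrix. Over all invertible real symmetric positive semidefinite n×n matrices J with Tr J ≤ 1, the minimum of Tr{(√S J √S)^{-1}} equals (Tr{S^{-1/2}})², and J attains the minimum if and only if J = S^{-1/2} / Tr{S^{-1/2}}. -/

import Mathlib

open Matrix

section Aux

variable {n : ℕ}

private lemma psd_diag_nonneg {A : Matrix (Fin n) (Fin n) ℝ} (hA : A.PosSemidef) (i : Fin n) :
    0 ≤ A i i := by
  have h := hA.dotProduct_mulVec_nonneg (Pi.single i 1)
  simpa [dotProduct, mulVec, Pi.single_apply] using h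

private lemma psd_trace_nonneg {A : Matrix (Fin n) (Fin n) ℝ} (hA : A.PosSemidef) :
    0 ≤ A.trace :=
  Finset.sum_nonneg fun i _ => psd_diag_nonneg hA i

private lemma pd_trace_pos (hn : 0 < n) {A : Matrix (Fin n) (Fin n) ℝ} (hA : A.PosDef) :
    0 < A.trace := by
  have : Nonempty (Fin n) := ⟨⟨0, hn⟩⟩
  refine Finset.sum_pos (fun i _ => ?_) Finset.univ_nonempty
  have h := hA.dotProduct_mulVec_pos (x := Pi.single i 1) fun hc => one_ne_zero (by rw [← Pi.single_eq_same (M := fun _ : Fin n => ℝ) i 1, hc]; rfl)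
  simpa [dotProduct, mulVec, Pi.single_apply] using h

private lemma psd_trace_eq_zero {A : Matrix (Fin n) (Fin n) ℝ} (hA : A.PosSemidef)
    (h : A.trace = 0) : A = 0 := by
  classical
  have hH := hA.1
  set U : Matrix (Fin n) (Fin n) ℝ := (hH.eigenvectorUnitary : Matrix (Fin n) (Fin n) ℝ) with hU
  have hUU : star U * U = 1 := Matrix.mem_unitaryGroup_iff'.mp hH.eigenvectorUnitary.2
  have htr : A.trace = ∑ i, hH.eigenvalues i := by
    conv_lhs => rw [hH.spectral_theorem]
    rw [Unitary.conjStarAlgAut_apply, ← hU, Matrix.trace_mul_comm, ← Matrix.mul_assoc, hUU, Matrix.one_mul, Matrix.trace_diagonal]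
    simp
  have hev : ∀ i, hH.eigenvalues i = 0 := by
    have := (Finset.sum_eq_zero_iff_of_nonneg
      (fun i _ => hA.eigenvalues_nonneg i)).mp (htr ▸ h)
    intro i; exact this i (Finset.mem_univ i)
  have hdiag : Matrix.diagonal (RCLike.ofReal ∘ hH.eigenvalues : Fin n → ℝ) = 0 := by
    rw [show (RCLike.ofReal ∘ hH.eigenvalues : Fin n → ℝ) = 0 from funext fun i => by
      simp [hev i]]
    exact Matrix.diagonal_zero
  calc A = U * Matrix.diagonal (RCLike.ofReal ∘ hH.eigenvalues) * star U :=
        hH.spectral_theorem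
    _ = 0 := by rw [hdiag, Matrix.mul_zero, Matrix.zero_mul]

private lemma posDef_of_psd_isUnit {J : Matrix (Fin n) (Fin n) ℝ} (hJ : J.PosSemidef)
    (hu : IsUnit J) : J.PosDef := by
  refine Matrix.PosDef.of_dotProduct_mulVec_pos hJ.1 fun x hx => lt_of_le_of_ne (hJ.dotProduct_mulVec_nonneg x) fun h => hx ?_
  have hJx : J *ᵥ x = 0 := (hJ.dotProduct_mulVec_zero_iff x).mp h.symm
  have hinj := Matrix.mulVec_injective_iff_isUnit.mpr hu
  have := hinj (hJx.trans (Matrix.mulVec_zero J).symm)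
  exact this

private lemma conj_posDef {J R : Matrix (Fin n) (Fin n) ℝ} (hJ : J.PosDef) (hR : R.PosDef) :
    (R * J * R).PosDef := by
  refine Matrix.PosDef.of_dotProduct_mulVec_pos ?_ ?_
  · show (R * J * R)ᴴ = R * J * R
    rw [Matrix.conjTranspose_mul, Matrix.conjTranspose_mul, hJ.1.eq, hR.1.eq, Matrix.mul_assoc]
  · intro x hx
    have hRx : R *ᵥ x ≠ 0 := fun h => hx <|
      (Matrix.mulVec_injective_iff_isUnit.mpr hR.isUnit) (h.trans (Matrix.mulVec_zero R).symm)
    have key : star x ⬝ᵥ (R * J * R) *ᵥ x = star (R *ᵥ x) ⬝ᵥ J *ᵥ (R *ᵥ x) := by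
      rw [← Matrix.mulVec_mulVec, ← Matrix.mulVec_mulVec, Matrix.dotProduct_mulVec,
        Matrix.star_mulVec, hR.1.eq]
    rw [key]
    exact hJ.dotProduct_mulVec_pos hRx

private lemma posDef_smul {A : Matrix (Fin n) (Fin n) ℝ} (hA : A.PosDef) {c : ℝ} (hc : 0 < c) :
    (c • A).PosDef := by
  refine Matrix.PosDef.of_dotProduct_mulVec_pos ?_ ?_
  · show (c • A)ᴴ = c • A
    rw [Matrix.conjTranspose_smul, hA.1.eq, star_trivial]
  · intro x hx
    rw [Matrix.smul_mulVec, dotProduct_smul, smul_eq_mul]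
    exact mul_pos hc (hA.dotProduct_mulVec_pos hx)

private lemma conj_eq_zero {M X : Matrix (Fin n) (Fin n) ℝ} (hM : M.PosDef)
    (hX : X.IsHermitian) (h : X * M * X = 0) : X = 0 := by
  have hv : ∀ v : Fin n → ℝ, X *ᵥ v = 0 := by
    intro v
    by_contra hne
    have key : star v ⬝ᵥ (X * M * X) *ᵥ v = star (X *ᵥ v) ⬝ᵥ M *ᵥ (X *ᵥ v) := by
      rw [← Matrix.mulVec_mulVec, ← Matrix.mulVec_mulVec, Matrix.dotProduct_mulVec,
        Matrix.star_mulVec, hX.eq]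
    have hpos := hM.dotProduct_mulVec_pos hne
    rw [← key, h] at hpos
    simp at hpos
  ext i j
  have := congrFun (hv (Pi.single j 1)) i
  simpa [mulVec, dotProduct, Pi.single_apply] using this

end Aux

/-- (A-optimal design, matrix form.) For real symmetric positive definite `S` with
`R = √S` (so `S^{-1/2} = R⁻¹`), over invertible real symmetric positive semidefinite `J`
with `Tr J ≤ 1`, the minimum of `Tr{(√S J √S)⁻¹}` equals `(Tr{S^{-1/2}})²`, and it is
attained exactly at `J = S^{-1/2} / Tr{S^{-1/2}}`. -/
theorem A_optimal_design {n : ℕ} (hn : 0 < n) (S R : Matrix (Fin n) (Fin n) ℝ)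
    (hS : S.PosDef) (hR : R.PosDef) (hRR : R * R = S) :
    IsLeast {x : ℝ | ∃ J : Matrix (Fin n) (Fin n) ℝ,
        J.PosSemidef ∧ IsUnit J ∧ J.trace ≤ 1 ∧ x = ((R * J * R)⁻¹).trace}
      ((R⁻¹).trace ^ 2) ∧
    ∀ J : Matrix (Fin n) (Fin n) ℝ, J.PosSemidef → IsUnit J → J.trace ≤ 1 →
      (((R * J * R)⁻¹).trace = (R⁻¹).trace ^ 2 ↔
        J = ((R⁻¹).trace)⁻¹ • R⁻¹) := by
  classical
  set t : ℝ := (R⁻¹).trace with ht_def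
  have hRinv : (R⁻¹).PosDef := hR.inv
  have ht : 0 < t := pd_trace_pos hn hRinv
  have hRdet : IsUnit R.det := (Matrix.isUnit_iff_isUnit_det R).mp hR.isUnit
  have hRR1 : R * R⁻¹ = 1 := Matrix.mul_nonsing_inv R hRdet
  have hR1R : R⁻¹ * R = 1 := Matrix.nonsing_inv_mul R hRdet
  -- the candidate optimum
  set J₀ : Matrix (Fin n) (Fin n) ℝ := t⁻¹ • R⁻¹ with hJ₀_def
  have hJ₀pd : J₀.PosDef := posDef_smul hRinv (inv_pos.mpr ht)
  have hMJ₀ : R * J₀ * R = t⁻¹ • R := by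
    rw [hJ₀_def, Matrix.mul_smul, Matrix.smul_mul, hRR1, Matrix.one_mul]
  have hMJ₀inv : (t⁻¹ • R)⁻¹ = t • R⁻¹ := by
    apply Matrix.inv_eq_right_inv
    rw [Matrix.smul_mul, Matrix.mul_smul, smul_smul, inv_mul_cancel₀ ht.ne', one_smul, hRR1]
  have hJ₀val : ((R * J₀ * R)⁻¹).trace = t ^ 2 := by
    rw [hMJ₀, hMJ₀inv, Matrix.trace_smul, smul_eq_mul, ← ht_def, sq]
  have hJ₀tr : J₀.trace = 1 := by
    rw [hJ₀_def, Matrix.trace_smul, smul_eq_mul, ← ht_def, inv_mul_cancel₀ ht.ne']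
  -- the key inequality / equality analysis for arbitrary admissible J
  have key : ∀ J : Matrix (Fin n) (Fin n) ℝ, J.PosSemidef → IsUnit J → J.trace ≤ 1 →
      t ^ 2 ≤ ((R * J * R)⁻¹).trace ∧
      (((R * J * R)⁻¹).trace = t ^ 2 → J = t⁻¹ • R⁻¹) := by
    intro J hJ hJu hJtr
    have hJpd : J.PosDef := posDef_of_psd_isUnit hJ hJu
    set M : Matrix (Fin n) (Fin n) ℝ := R * J * R with hM_def
    have hM : M.PosDef := conj_posDef hJpd hR
    have hMdet : IsUnit M.det := (Matrix.isUnit_iff_isUnit_det M).mp hM.isUnit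
    have hMM1 : M * M⁻¹ = 1 := Matrix.mul_nonsing_inv M hMdet
    have hM1M : M⁻¹ * M = 1 := Matrix.nonsing_inv_mul M hMdet
    have hAMA : R⁻¹ * M * R⁻¹ = J := by
      rw [hM_def, ← Matrix.mul_assoc, ← Matrix.mul_assoc, hR1R, Matrix.one_mul,
        Matrix.mul_assoc, hRR1, Matrix.mul_one]
    set X : Matrix (Fin n) (Fin n) ℝ := M⁻¹ - t • R⁻¹ with hX_def
    have hXh : X.IsHermitian := by
      have h1 : (M⁻¹).IsHermitian := hM.inv.1
      have h2 : (t • R⁻¹).IsHermitian := (posDef_smul hRinv ht).1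
      exact h1.sub h2
    have hXMX : (X * M * X).PosSemidef := by
      have := hM.posSemidef.mul_mul_conjTranspose_same X
      rwa [hXh.eq] at this
    have hexp : X * M * X = M⁻¹ - t • R⁻¹ - t • R⁻¹ + (t * t) • J := by
      have h1 : X * M = 1 - t • (R⁻¹ * M) := by
        rw [hX_def, Matrix.sub_mul, hM1M, Matrix.smul_mul]
      rw [h1, hX_def, Matrix.sub_mul, Matrix.one_mul, Matrix.smul_mul, Matrix.mul_sub,
        Matrix.mul_smul, Matrix.mul_assoc, hMM1, Matrix.mul_one, smul_sub, smul_smul, hAMA]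
      abel
    have htr : (X * M * X).trace = (M⁻¹).trace - 2 * (t * t) + (t * t) * J.trace := by
      rw [hexp]
      simp only [Matrix.trace_add, Matrix.trace_sub, Matrix.trace_smul, smul_eq_mul, ← ht_def]
      ring
    have hXMXtr : 0 ≤ (X * M * X).trace := psd_trace_nonneg hXMX
    constructor
    · nlinarith [sq_nonneg t]
    · intro heq
      have hXMX0 : (X * M * X).trace = 0 := by nlinarith [sq_nonneg t]
      have hX0 : X = 0 := conj_eq_zero hM hXh (psd_trace_eq_zero hXMX hXMX0)
      have hMinv : M⁻¹ = t • R⁻¹ := by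
        have := sub_eq_zero.mp (hX_def ▸ hX0)
        exact this
      have hMval : M = t⁻¹ • R := by
        have h2 : (t • R⁻¹)⁻¹ = t⁻¹ • R := by
          apply Matrix.inv_eq_right_inv
          rw [Matrix.smul_mul, Matrix.mul_smul, smul_smul, mul_inv_cancel₀ ht.ne', one_smul,
            hR1R]
        calc M = M⁻¹⁻¹ := (Matrix.nonsing_inv_nonsing_inv M hMdet).symm
          _ = (t • R⁻¹)⁻¹ := by rw [hMinv]
          _ = t⁻¹ • R := h2
      calc J = R⁻¹ * M * R⁻¹ := hAMA.symm
        _ = t⁻¹ • (R⁻¹ * R * R⁻¹) := by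
            rw [hMval, Matrix.mul_smul, Matrix.smul_mul, Matrix.mul_assoc]
        _ = t⁻¹ • R⁻¹ := by rw [hR1R, Matrix.one_mul]
  refine ⟨⟨⟨J₀, hJ₀pd.posSemidef, hJ₀pd.isUnit, le_of_eq hJ₀tr, hJ₀val.symm⟩, ?_⟩, ?_⟩
  · rintro x ⟨J, hJ, hJu, hJtr, rfl⟩
    exact (key J hJ hJu hJtr).1
  · intro J hJ hJu hJtr
    refine ⟨fun h => (key J hJ hJu hJtr).2 h, fun h => ?_⟩
    rw [h]
    exact hJ₀val
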